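/- The squared loss R(t) = f(t)²/2 is strictly increasing and convex on (0,∞), and its derivative satisfies R'(t) = f(t)/(2τ(t)) ≤ δ/2 for all t > 0. -/

import Mathlib

/-!
For `τ > 0`, `Fobj δ t τ = L τ + t / (2τ)` with `L τ = τ/2 (δ - 1/2) + ∫_{x>0} τ/2 ((x - 2/τ)₊)² φ`,
which is convex in `τ` because each integrand is a supremum of affine functions of `τ`. At the
minimiser `a = τ(t)` the first-order condition makes `t / (2a²)` a subgradient of `L`. Comparing
the subgradient inequalities at `τ(s)` and `τ(t)` gives `t (τ s - τ t)² ≤ τ t (s - t) (τ s - τ t)`,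
so `τ` is nondecreasing and continuous, and `t / τ(t)²` is nondecreasing. The envelope bounds
`(s - t) / (2τ(s)) ≤ f s - f t ≤ (s - t) / (2τ(t))` then give `f' = 1 / (2τ)`, hence
`R' = f / (2τ) = (δ - 1/2)/4 + ∫_{x>0} ((x - 2/τ)₊)² φ / 4 + t / (4τ²)`. Each term is
nondecreasing in `t`, and the sum is at most `δ/2` since `L` has slopes at most `δ/2`
(so `t / τ² ≤ δ`) and `∫_{x>0} x² φ = 1/2`.
-/

open Real Set MeasureTheory

/-- standard normal density -/
noncomputable def stdPDF (x : ℝ) : ℝ := Real.exp (-x ^ 2 / 2) / Real.sqrt (2 * Real.pi)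

/-- The objective F(τ; t, δ). -/
noncomputable def Fobj (δ t τ : ℝ) : ℝ :=
  τ / 2 * (δ - 1 / 2) + t / (2 * τ)
    + τ / 2 * ∫ x in Set.Ioi (2 / τ), (x - 2 / τ) ^ 2 * stdPDF x

open Filter Topology

theorem ConvexOn.le_of_isMinOn_add {s : Set ℝ} {L h : ℝ → ℝ} {h' a σ : ℝ}
    (hL : ConvexOn ℝ s L) (hh : HasDerivAt h h' a) (hmin : IsMinOn (L + h) s a) (ha : a ∈ s)
    (hσ : σ ∈ s) : L a - h' * (σ - a) ≤ L σ := by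
  have hline : HasDerivAt (fun r : ℝ => a + r * (σ - a)) (σ - a) 0 := by
    simpa using ((hasDerivAt_id (0 : ℝ)).mul_const (σ - a)).const_add a
  have hslope : Tendsto (fun r : ℝ => r⁻¹ * (h (a + r * (σ - a)) - h a)) (𝓝[>] 0)
      (𝓝 (h' * (σ - a))) := by
    have hk := (by simpa using hh : HasDerivAt h h' (a + 0 * (σ - a))).comp 0 hline
    simpa [Function.comp_def] using hk.tendsto_slope_zero_right
  -- moving a fraction `r` of the way towards `σ`: convexity bounds the gain in `L`,
  -- minimality bounds the loss in `h`
  have hchord : ∀ r ∈ Ioo (0 : ℝ) 1, L a - L σ ≤ r⁻¹ * (h (a + r * (σ - a)) - h a) := by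
    rintro r ⟨hr₀, hr₁⟩
    have hmem : (1 - r) • a + r • σ = a + r * (σ - a) := by simp only [smul_eq_mul]; ring
    have hconv := hL.2 ha hσ (sub_nonneg.2 hr₁.le) hr₀.le (sub_add_cancel 1 r)
    have hm : (L + h) a ≤ (L + h) (a + r * (σ - a)) :=
      hmem ▸ hmin (hL.1 ha hσ (sub_nonneg.2 hr₁.le) hr₀.le (sub_add_cancel 1 r))
    rw [hmem] at hconv
    simp only [Pi.add_apply, smul_eq_mul] at hm hconv
    rw [le_inv_mul_iff₀ hr₀]
    nlinarith
  linarith [ge_of_tendsto hslope (eventually_of_mem (Ioo_mem_nhdsGT one_pos) hchord)]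

theorem hasDerivAt_of_slope_mem_uIcc {f g : ℝ → ℝ} {t : ℝ} (hg : ContinuousAt g t)
    (hslope : ∀ᶠ s in 𝓝[≠] t, slope f t s ∈ uIcc (g s) (g t)) : HasDerivAt f (g t) t := by
  have hlim : Tendsto g (𝓝[≠] t) (𝓝 (g t)) := hg.tendsto.mono_left nhdsWithin_le_nhds
  rw [hasDerivAt_iff_tendsto_slope]
  exact tendsto_of_tendsto_of_tendsto_of_le_of_le'
    (by simpa using hlim.min (tendsto_const_nhds (x := g t)))
    (by simpa using hlim.max (tendsto_const_nhds (x := g t)))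
    (hslope.mono fun _ hs => hs.1) (hslope.mono fun _ hs => hs.2)

theorem MonotoneOn.convexOn_of_hasDerivAt {D : Set ℝ} (hD : Convex ℝ D) (hDo : IsOpen D)
    {g g' : ℝ → ℝ} (hg : ∀ x ∈ D, HasDerivAt g (g' x) x) (hmono : MonotoneOn g' D) :
    ConvexOn ℝ D g := by
  refine MonotoneOn.convexOn_of_deriv hD
    (fun x hx => (hg x hx).continuousAt.continuousWithinAt) ?_ ?_ <;> rw [hDo.interior_eq]
  · exact fun x hx => (hg x hx).differentiableAt.differentiableWithinAt
  · exact hmono.congr fun x hx => ((hg x hx).deriv).symm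

theorem ConvexOn.le_of_isMinOn_add_div {L : ℝ → ℝ} (hL : ConvexOn ℝ (Ioi 0) L) {t a σ : ℝ}
    (ha : 0 < a) (hmin : IsMinOn (fun σ => L σ + t / (2 * σ)) (Ioi 0) a) (hσ : 0 < σ) :
    L a + t / (2 * a ^ 2) * (σ - a) ≤ L σ := by
  have hh : HasDerivAt (fun σ => t / (2 * σ)) (-(t / (2 * a ^ 2))) a := by
    have hfun : (fun σ => t / (2 * σ)) = fun σ => t / 2 * σ⁻¹ := by ext; ring
    rw [hfun]
    exact ((hasDerivAt_inv ha.ne').const_mul (t / 2)).congr_deriv (by ring)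
  simpa using hL.le_of_isMinOn_add hh hmin ha hσ

def IsArgminFamily (L τ : ℝ → ℝ) : Prop :=
  ∀ t, 0 < t → 0 < τ t ∧ IsMinOn (fun σ => L σ + t / (2 * σ)) (Ioi 0) (τ t)

namespace IsArgminFamily

variable {L τ f : ℝ → ℝ}

theorem mul_sq_sub_le (hτ : IsArgminFamily L τ) (hL : ConvexOn ℝ (Ioi 0) L) {s t : ℝ}
    (hs : 0 < s) (ht : 0 < t) : t * (τ s - τ t) ^ 2 ≤ τ t * (s - t) * (τ s - τ t) := by
  obtain ⟨ha, hmin_t⟩ := hτ t ht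
  obtain ⟨hb, hmin_s⟩ := hτ s hs
  have hsub := hL.le_of_isMinOn_add_div ha hmin_t hb
  have hcmp : L (τ s) + s / (2 * τ s) ≤ L (τ t) + s / (2 * τ t) := hmin_s ha
  have key : t / (2 * τ t ^ 2) * (τ s - τ t) ≤ s * (τ s - τ t) / (2 * τ t * τ s) := by
    have : s / (2 * τ t) - s / (2 * τ s) = s * (τ s - τ t) / (2 * τ t * τ s) := by
      field_simp
    linarith
  rw [div_mul_eq_mul_div, div_le_div_iff₀ (by positivity) (by positivity)] at key
  nlinarith [mul_pos ha hb]

theorem monotoneOn (hτ : IsArgminFamily L τ) (hL : ConvexOn ℝ (Ioi 0) L) :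
    MonotoneOn τ (Ioi 0) := by
  intro s hs t ht hst
  have := hτ.mul_sq_sub_le hL hs ht
  by_contra! hlt
  have hlhs : 0 < t * (τ s - τ t) ^ 2 := mul_pos ht (by nlinarith)
  have hrhs : τ t * (s - t) * (τ s - τ t) ≤ 0 :=
    mul_nonpos_of_nonpos_of_nonneg
      (mul_nonpos_of_nonneg_of_nonpos (hτ t ht).1.le (by linarith)) (by linarith)
  linarith

theorem continuousAt (hτ : IsArgminFamily L τ) (hL : ConvexOn ℝ (Ioi 0) L) {t : ℝ}
    (ht : 0 < t) : ContinuousAt τ t := by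
  have hlip : ∀ s, 0 < s → dist (τ s) (τ t) ≤ τ t / t * dist s t := by
    intro s hs
    have h := hτ.mul_sq_sub_le hL hs ht
    rw [Real.dist_eq, Real.dist_eq, div_mul_eq_mul_div, le_div_iff₀ ht]
    rcases eq_or_ne (τ s) (τ t) with he | hne
    · simpa [he] using mul_nonneg (hτ t ht).1.le (abs_nonneg (s - t))
    have hpos : 0 < |τ s - τ t| := abs_pos.mpr (sub_ne_zero.mpr hne)
    refine le_of_mul_le_mul_right ?_ hpos
    calc |τ s - τ t| * t * |τ s - τ t| = t * (τ s - τ t) ^ 2 := by rw [← sq_abs]; ring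
      _ ≤ τ t * (s - t) * (τ s - τ t) := h
      _ ≤ |τ t * (s - t) * (τ s - τ t)| := le_abs_self _
      _ = τ t * |s - t| * |τ s - τ t| := by rw [abs_mul, abs_mul, abs_of_pos (hτ t ht).1]
  rw [ContinuousAt, tendsto_iff_dist_tendsto_zero]
  refine squeeze_zero' (.of_forall fun _ => dist_nonneg)
    ((eventually_gt_nhds ht).mono hlip) ?_
  simpa using ((tendsto_id (x := 𝓝 t)).dist (tendsto_const_nhds (x := t))).const_mul (τ t / t)

theorem le_add (hτ : IsArgminFamily L τ) (hf : ∀ t, 0 < t → f t = L (τ t) + t / (2 * τ t))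
    {s t : ℝ} (hs : 0 < s) (ht : 0 < t) : f s ≤ f t + (s - t) / (2 * τ t) := by
  have hmin : L (τ s) + s / (2 * τ s) ≤ L (τ t) + s / (2 * τ t) := (hτ s hs).2 (hτ t ht).1
  rw [hf s hs, hf t ht, sub_div]
  linarith

theorem strictMonoOn (hτ : IsArgminFamily L τ)
    (hf : ∀ t, 0 < t → f t = L (τ t) + t / (2 * τ t)) : StrictMonoOn f (Ioi 0) := by
  intro s hs t ht hst
  have := hτ.le_add hf hs ht
  have : (s - t) / (2 * τ t) < 0 :=
    div_neg_of_neg_of_pos (by linarith) (by linarith [(hτ t ht).1])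
  linarith

theorem hasDerivAt (hτ : IsArgminFamily L τ) (hL : ConvexOn ℝ (Ioi 0) L)
    (hf : ∀ t, 0 < t → f t = L (τ t) + t / (2 * τ t)) {t : ℝ} (ht : 0 < t) :
    HasDerivAt f (1 / (2 * τ t)) t := by
  have hcont : ContinuousAt (fun s => 1 / (2 * τ s)) t :=
    continuousAt_const.div (continuousAt_const.mul (hτ.continuousAt hL ht))
      (by linarith [(hτ t ht).1])
  refine hasDerivAt_of_slope_mem_uIcc hcont ?_
  filter_upwards [self_mem_nhdsWithin, nhdsWithin_le_nhds (eventually_gt_nhds ht)] with s hst hs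
  have hup := hτ.le_add hf hs ht
  have hlow := hτ.le_add hf ht hs
  have e : (t - s) / (2 * τ s) = -((s - t) / (2 * τ s)) := by ring
  rw [slope_def_field]
  rcases lt_or_gt_of_ne (show s ≠ t from hst) with hlt | hgt
  · refine Icc_subset_uIcc' ⟨?_, ?_⟩
    · rw [le_div_iff_of_neg (sub_neg.2 hlt), one_div_mul_eq_div]; linarith
    · rw [div_le_iff_of_neg (sub_neg.2 hlt), one_div_mul_eq_div]; linarith
  · refine Icc_subset_uIcc ⟨?_, ?_⟩
    · rw [le_div_iff₀ (sub_pos.2 hgt), one_div_mul_eq_div]; linarith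
    · rw [div_le_iff₀ (sub_pos.2 hgt), one_div_mul_eq_div]; linarith

theorem monotoneOn_div_sq (hτ : IsArgminFamily L τ) (hL : ConvexOn ℝ (Ioi 0) L) :
    MonotoneOn (fun t => t / τ t ^ 2) (Ioi 0) := by
  intro s hs t ht hst
  obtain ⟨ha, hmin_s⟩ := hτ s hs
  obtain ⟨hb, hmin_t⟩ := hτ t ht
  have h₁ := hL.le_of_isMinOn_add_div ha hmin_s hb
  have h₂ := hL.le_of_isMinOn_add_div hb hmin_t ha
  simp only
  rcases (hτ.monotoneOn hL hs ht hst).eq_or_lt with he | hlt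
  · rw [he]; gcongr
  · have : s / (2 * τ s ^ 2) ≤ t / (2 * τ t ^ 2) := by nlinarith
    rw [div_le_div_iff₀ (by positivity) (by positivity)] at this ⊢
    linarith

end IsArgminFamily

lemma stdPDF_nonneg (x : ℝ) : 0 ≤ stdPDF x := by
  unfold stdPDF; positivity

lemma continuous_stdPDF : Continuous stdPDF := by
  unfold stdPDF; fun_prop

lemma sq_mul_stdPDF_eq (x : ℝ) :
    x ^ 2 * stdPDF x = x ^ (2 : ℝ) * exp (-(1 / 2) * x ^ (2 : ℝ)) / √(2 * π) := by
  rw [stdPDF, rpow_two]; ring_nf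

lemma integrableOn_sq_mul_stdPDF : IntegrableOn (fun x => x ^ 2 * stdPDF x) (Ioi 0) := by
  simp_rw [sq_mul_stdPDF_eq]
  exact (integrableOn_rpow_mul_exp_neg_mul_rpow (by norm_num) (by norm_num) (by norm_num)).div_const
    _

lemma integral_sq_mul_stdPDF : ∫ x in Ioi 0, x ^ 2 * stdPDF x = 1 / 2 := by
  simp_rw [sq_mul_stdPDF_eq]
  rw [integral_div, integral_rpow_mul_exp_neg_mul_rpow (by norm_num) (by norm_num) (by norm_num)]
  have hΓ : Gamma ((2 + 1) / 2) = √π / 2 := by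
    simpa [-one_div, show (1 : ℝ) + 1 / 2 = (2 + 1) / 2 by norm_num] using
      Gamma_nat_add_one_add_half 0
  have h2 : (1 / 2 : ℝ) ^ (-(2 + 1) / 2 : ℝ) = 2 * √2 := by
    rw [one_div, inv_rpow (by norm_num), ← rpow_neg (by norm_num), sqrt_eq_rpow,
      show -(-(2 + 1) / 2 : ℝ) = 1 + 1 / 2 by norm_num, rpow_add (by norm_num), rpow_one]
  rw [hΓ, h2, sqrt_mul (by norm_num)]
  field_simp

noncomputable def penalty (τ x : ℝ) : ℝ := τ / 2 * max (x - 2 / τ) 0 ^ 2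

-- `penalty · x` is the supremum over `s ≥ 0` of these affine functions of `τ`, attained at
-- `s = (x - 2/τ)₊` (`penalty_eq_affine`).
lemma affine_le_penalty {τ s : ℝ} (x : ℝ) (hτ : 0 < τ) (hs : 0 ≤ s) :
    s * (τ * x - 2) - s ^ 2 * τ / 2 ≤ penalty τ x := by
  unfold penalty
  rcases le_total (x - 2 / τ) 0 with h | h
  · rw [max_eq_right h]
    have : τ * x - 2 ≤ 0 := by
      have := mul_le_mul_of_nonneg_left h hτ.le
      rwa [mul_sub, mul_div_cancel₀ _ hτ.ne', mul_zero] at this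
    nlinarith [mul_nonneg hs hτ.le]
  · rw [max_eq_left h]
    have key : τ / 2 * (x - 2 / τ) ^ 2 - (s * (τ * x - 2) - s ^ 2 * τ / 2)
        = τ / 2 * (x - 2 / τ - s) ^ 2 := by
      field_simp
      ring
    nlinarith [mul_nonneg hτ.le (sq_nonneg (x - 2 / τ - s))]

lemma penalty_eq_affine {τ : ℝ} (x : ℝ) (hτ : 0 < τ) :
    penalty τ x = max (x - 2 / τ) 0 * (τ * x - 2) - max (x - 2 / τ) 0 ^ 2 * τ / 2 := by
  unfold penalty
  rcases le_total (x - 2 / τ) 0 with h | h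
  · simp [max_eq_right h]
  · rw [max_eq_left h]
    field_simp
    ring

lemma convexOn_penalty (x : ℝ) : ConvexOn ℝ (Ioi 0) (fun τ => penalty τ x) := by
  refine ⟨convex_Ioi 0, fun τ₀ h₀ τ₁ h₁ a b ha hb hab => ?_⟩
  have hτ : 0 < a • τ₀ + b • τ₁ := convex_Ioi (0 : ℝ) h₀ h₁ ha hb hab
  simp only [smul_eq_mul] at hτ ⊢
  rw [penalty_eq_affine x hτ]
  set s := max (x - 2 / (a * τ₀ + b * τ₁)) 0
  have e₀ := affine_le_penalty x (mem_Ioi.mp h₀) (le_max_right _ _ : 0 ≤ s)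
  have e₁ := affine_le_penalty x (mem_Ioi.mp h₁) (le_max_right _ _ : 0 ≤ s)
  linear_combination a * e₀ + b * e₁ + 2 * s * hab

lemma penalty_sub_le {τ σ : ℝ} (x : ℝ) (hτ : 0 < τ) (hτσ : τ ≤ σ) :
    penalty σ x - penalty τ x ≤ (σ - τ) * x ^ 2 / 2 := by
  have := affine_le_penalty x hτ (le_max_right (x - 2 / σ) 0)
  rw [penalty_eq_affine x (hτ.trans_le hτσ)]
  nlinarith [mul_nonneg (sub_nonneg.mpr hτσ) (sq_nonneg (x - max (x - 2 / σ) 0))]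

lemma penalty_nonneg {τ : ℝ} (x : ℝ) (hτ : 0 ≤ τ) : 0 ≤ penalty τ x := by
  unfold penalty; positivity

lemma penalty_le {τ x : ℝ} (hτ : 0 < τ) (hx : 0 ≤ x) : penalty τ x ≤ τ / 2 * x ^ 2 := by
  unfold penalty
  gcongr
  exact max_le (by linarith [div_pos two_pos hτ]) hx

lemma monotoneOn_penalty_div (x : ℝ) : MonotoneOn (fun τ => penalty τ x / τ) (Ioi 0) := by
  intro τ hτ σ hσ hτσ
  have hdiv : ∀ {τ : ℝ}, 0 < τ → penalty τ x / τ = max (x - 2 / τ) 0 ^ 2 / 2 := fun hτ => by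
    unfold penalty; field_simp
  simp only [hdiv hτ, hdiv hσ]
  gcongr

-- `τ/2 ∫_{x > 2/τ} (x - 2/τ)² φ`, written over the fixed domain `x > 0` so that convexity in `τ`
-- can be checked pointwise.
noncomputable def expectedPenalty (τ : ℝ) : ℝ := ∫ x in Ioi 0, penalty τ x * stdPDF x

lemma integrableOn_penalty_mul_stdPDF {τ : ℝ} (hτ : 0 < τ) :
    IntegrableOn (fun x => penalty τ x * stdPDF x) (Ioi 0) := by
  refine (integrableOn_sq_mul_stdPDF.const_mul (τ / 2)).mono' ?_ ?_
  · exact (Continuous.aestronglyMeasurable (by unfold penalty; fun_prop)).mul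
      continuous_stdPDF.aestronglyMeasurable
  · filter_upwards [ae_restrict_mem measurableSet_Ioi] with x hx
    rw [Real.norm_of_nonneg (mul_nonneg (penalty_nonneg x hτ.le) (stdPDF_nonneg x)), ← mul_assoc]
    exact mul_le_mul_of_nonneg_right (penalty_le hτ (le_of_lt hx)) (stdPDF_nonneg x)

lemma convexOn_expectedPenalty : ConvexOn ℝ (Ioi 0) expectedPenalty := by
  refine ⟨convex_Ioi 0, fun τ₀ h₀ τ₁ h₁ a b ha hb hab => ?_⟩
  have hτ : 0 < a • τ₀ + b • τ₁ := convex_Ioi (0 : ℝ) h₀ h₁ ha hb hab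
  have hi₀ := (integrableOn_penalty_mul_stdPDF h₀).const_mul a
  have hi₁ := (integrableOn_penalty_mul_stdPDF h₁).const_mul b
  simp only [expectedPenalty, smul_eq_mul]
  rw [← integral_const_mul, ← integral_const_mul, ← integral_add hi₀ hi₁]
  refine setIntegral_mono_on (integrableOn_penalty_mul_stdPDF hτ) (hi₀.add hi₁)
    measurableSet_Ioi fun x _ => ?_
  have := mul_le_mul_of_nonneg_right ((convexOn_penalty x).2 h₀ h₁ ha hb hab) (stdPDF_nonneg x)
  simp only [smul_eq_mul] at this
  linarith

lemma expectedPenalty_sub_le {τ σ : ℝ} (hτ : 0 < τ) (hτσ : τ ≤ σ) :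
    expectedPenalty σ - expectedPenalty τ ≤ (σ - τ) / 4 := by
  have hσ := hτ.trans_le hτσ
  rw [expectedPenalty, expectedPenalty, ← integral_sub (integrableOn_penalty_mul_stdPDF hσ)
    (integrableOn_penalty_mul_stdPDF hτ), show (σ - τ) / 4 = (σ - τ) / 2 * (1 / 2) by ring,
    ← integral_sq_mul_stdPDF, ← integral_const_mul]
  refine setIntegral_mono_on ((integrableOn_penalty_mul_stdPDF hσ).sub
    (integrableOn_penalty_mul_stdPDF hτ)) (integrableOn_sq_mul_stdPDF.const_mul _)
    measurableSet_Ioi fun x _ => ?_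
  have := mul_le_mul_of_nonneg_right (penalty_sub_le x hτ hτσ) (stdPDF_nonneg x)
  linarith

lemma expectedPenalty_nonneg {τ : ℝ} (hτ : 0 ≤ τ) : 0 ≤ expectedPenalty τ :=
  setIntegral_nonneg measurableSet_Ioi fun x _ =>
    mul_nonneg (penalty_nonneg x hτ) (stdPDF_nonneg x)

lemma expectedPenalty_le {τ : ℝ} (hτ : 0 < τ) : expectedPenalty τ ≤ τ / 4 := by
  rw [show τ / 4 = τ / 2 * (1 / 2) by ring, ← integral_sq_mul_stdPDF, ← integral_const_mul]
  refine setIntegral_mono_on (integrableOn_penalty_mul_stdPDF hτ)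
    (integrableOn_sq_mul_stdPDF.const_mul _) measurableSet_Ioi fun x hx => ?_
  rw [← mul_assoc]
  exact mul_le_mul_of_nonneg_right (penalty_le hτ (le_of_lt hx)) (stdPDF_nonneg x)

lemma monotoneOn_expectedPenalty_div : MonotoneOn (fun τ => expectedPenalty τ / τ) (Ioi 0) := by
  intro τ hτ σ hσ hτσ
  show expectedPenalty τ / τ ≤ expectedPenalty σ / σ
  rw [expectedPenalty, expectedPenalty, ← integral_div, ← integral_div]
  refine setIntegral_mono_on ((integrableOn_penalty_mul_stdPDF hτ).div_const τ)
    ((integrableOn_penalty_mul_stdPDF hσ).div_const σ) measurableSet_Ioi fun x _ => ?_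
  rw [mul_div_right_comm, mul_div_right_comm (penalty σ x)]
  exact mul_le_mul_of_nonneg_right (monotoneOn_penalty_div x hτ hσ hτσ) (stdPDF_nonneg x)

noncomputable def Lobj (δ τ : ℝ) : ℝ := τ / 2 * (δ - 1 / 2) + expectedPenalty τ

lemma Fobj_eq_Lobj_add {δ t τ : ℝ} (hτ : 0 < τ) : Fobj δ t τ = Lobj δ τ + t / (2 * τ) := by
  have htail : ∫ x in Ioi 0, penalty τ x * stdPDF x
      = ∫ x in Ioi (2 / τ), τ / 2 * ((x - 2 / τ) ^ 2 * stdPDF x) := by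
    rw [setIntegral_eq_of_subset_of_forall_sdiff_eq_zero measurableSet_Ioi
      (Ioi_subset_Ioi (div_pos two_pos hτ).le)]
    · refine setIntegral_congr_fun measurableSet_Ioi fun x hx => ?_
      rw [penalty, max_eq_left (sub_nonneg.2 (le_of_lt hx))]
      ring
    · rintro x ⟨-, hx⟩
      rw [penalty, max_eq_right (sub_nonpos.2 (not_lt.1 hx))]
      ring
  rw [Fobj, Lobj, expectedPenalty, htail, integral_const_mul]
  ring

lemma convexOn_Lobj (δ : ℝ) : ConvexOn ℝ (Ioi 0) (Lobj δ) := by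
  refine ConvexOn.add ⟨convex_Ioi 0, fun x _ y _ a b _ _ _ => le_of_eq ?_⟩
    convexOn_expectedPenalty
  simp only [smul_eq_mul]
  ring

lemma Lobj_nonneg {δ τ : ℝ} (hδ : 1 / 2 < δ) (hτ : 0 < τ) : 0 ≤ Lobj δ τ :=
  add_nonneg (mul_nonneg (by positivity) (by linarith)) (expectedPenalty_nonneg hτ.le)

lemma Lobj_sub_le {δ τ σ : ℝ} (hτ : 0 < τ) (hτσ : τ ≤ σ) :
    Lobj δ σ - Lobj δ τ ≤ δ / 2 * (σ - τ) := by
  have := expectedPenalty_sub_le hτ hτσ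
  rw [Lobj, Lobj]
  linarith

lemma Lobj_value_div_eq {δ t τ : ℝ} (hτ : 0 < τ) :
    (Lobj δ τ + t / (2 * τ)) / (2 * τ)
      = (δ - 1 / 2) / 4 + expectedPenalty τ / τ / 2 + t / τ ^ 2 / 4 := by
  rw [Lobj]
  field_simp
  ring

theorem IsArgminFamily.monotoneOn_Lobj_value_div {δ : ℝ} {τ : ℝ → ℝ}
    (hτ : IsArgminFamily (Lobj δ) τ) :
    MonotoneOn (fun t => (Lobj δ (τ t) + t / (2 * τ t)) / (2 * τ t)) (Ioi 0) := by
  intro s hs t ht hst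
  have hL := convexOn_Lobj δ
  have hE := monotoneOn_expectedPenalty_div.comp (hτ.monotoneOn hL) (fun u hu => (hτ u hu).1)
    hs ht hst
  have hdiv := hτ.monotoneOn_div_sq hL hs ht hst
  simp only [Function.comp, Lobj_value_div_eq (hτ s hs).1, Lobj_value_div_eq (hτ t ht).1]
    at hE hdiv ⊢
  linarith

theorem IsArgminFamily.Lobj_value_div_le {δ t : ℝ} {τ : ℝ → ℝ} (hτ : IsArgminFamily (Lobj δ) τ)
    (ht : 0 < t) : (Lobj δ (τ t) + t / (2 * τ t)) / (2 * τ t) ≤ δ / 2 := by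
  obtain ⟨ha, hmin⟩ := hτ t ht
  have hsub := (convexOn_Lobj δ).le_of_isMinOn_add_div ha hmin (σ := τ t + 1) (by linarith)
  have hslope := Lobj_sub_le (δ := δ) ha (le_add_of_nonneg_right zero_le_one)
  simp only [add_sub_cancel_left, mul_one] at hsub hslope
  have hdiv : t / τ t ^ 2 ≤ δ := by
    have : t / (2 * τ t ^ 2) ≤ δ / 2 := by linarith
    rw [div_le_iff₀ (by positivity)] at this ⊢
    linarith
  have hE : expectedPenalty (τ t) / τ t ≤ 1 / 4 := by
    rw [div_le_iff₀ ha]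
    linarith [expectedPenalty_le ha]
  rw [Lobj_value_div_eq ha]
  linarith

theorem R_properties (δ : ℝ) (hδ : 1 / 2 < δ) (τmin f R : ℝ → ℝ)
    (hτ : ∀ t : ℝ, 0 < t → τmin t ∈ Set.Ioi (0 : ℝ) ∧
      IsMinOn (Fobj δ t) (Set.Ioi (0 : ℝ)) (τmin t))
    (hf : ∀ t : ℝ, 0 < t → f t = Fobj δ t (τmin t))
    (hR : ∀ t : ℝ, R t = f t ^ 2 / 2) :
    StrictMonoOn R (Set.Ioi (0 : ℝ)) ∧
    ConvexOn ℝ (Set.Ioi (0 : ℝ)) R ∧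
    (∀ t : ℝ, 0 < t →
      HasDerivAt R (f t / (2 * τmin t)) t ∧ f t / (2 * τmin t) ≤ δ / 2) := by
  have hL := convexOn_Lobj δ
  have hmin : IsArgminFamily (Lobj δ) τmin := fun t ht =>
    ⟨(hτ t ht).1, isMinOn_iff.2 fun σ hσ => by
      rw [← Fobj_eq_Lobj_add hσ, ← Fobj_eq_Lobj_add (hτ t ht).1]
      exact isMinOn_iff.1 (hτ t ht).2 σ hσ⟩
  have hfL : ∀ t, 0 < t → f t = Lobj δ (τmin t) + t / (2 * τmin t) := fun t ht =>
    (hf t ht).trans (Fobj_eq_Lobj_add (hτ t ht).1)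
  have hpos : ∀ t, 0 < t → 0 < f t := fun t ht => hfL t ht ▸
    add_pos_of_nonneg_of_pos (Lobj_nonneg hδ (hmin t ht).1)
      (div_pos ht (by linarith [(hmin t ht).1]))
  have hderiv : ∀ t ∈ Ioi (0 : ℝ), HasDerivAt R (f t / (2 * τmin t)) t := fun t ht => by
    rw [show R = fun s => f s ^ 2 / 2 from funext hR]
    refine (((hmin.hasDerivAt hL hfL ht).fun_pow 2).div_const 2).congr_deriv ?_
    norm_num
    ring
  refine ⟨fun s hs t ht hst => ?_, ?_, fun t ht => ⟨hderiv t ht, ?_⟩⟩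
  · rw [hR, hR]
    gcongr
    exacts [(hpos s hs).le, hmin.strictMonoOn hfL hs ht hst]
  · exact MonotoneOn.convexOn_of_hasDerivAt (convex_Ioi 0) isOpen_Ioi hderiv <|
      hmin.monotoneOn_Lobj_value_div.congr fun t ht => by rw [hfL t ht]
  · rw [hfL t ht]
    exact hmin.Lobj_value_div_le ht
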